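/- arXiv:1904.12525 — 3 statements merged into one kernel-verified Lean document; each statement's English description precedes it below -/
import Mathlib

section
/- Let G be a topological group which is strongly functionally generated by the collection of all subsets A ⊆ G that are relatively o-radial in G. Then G is proximally fine with respect to its right uniformity. -/
open Pointwise

universe u v

/-- Right uniform continuity of `f : G → Y`: a basis of the right uniformity of a topological
group `G` is given by the sets `{(g, h) : g * h⁻¹ ∈ U}`, `U` a neighborhood of the identity. -/
def RightUC {G : Type*} [Group G] (t : TopologicalSpace G) {Y : Type*} [UniformSpace Y]
    (f : G → Y) : Prop :=
  ∀ V ∈ uniformity Y, ∃ U ∈ @nhds G t 1, ∀ g h : G, g * h⁻¹ ∈ U → (f g, f h) ∈ V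

/-- Left uniform continuity of `f : G → Y`: a basis of the left uniformity of a topological
group `G` is given by the sets `{(g, h) : g⁻¹ * h ∈ U}`, `U` a neighborhood of the identity. -/
def LeftUC {G : Type*} [Group G] (t : TopologicalSpace G) {Y : Type*} [UniformSpace Y]
    (f : G → Y) : Prop :=
  ∀ V ∈ uniformity Y, ∃ U ∈ @nhds G t 1, ∀ g h : G, g⁻¹ * h ∈ U → (f g, f h) ∈ V

/-- `f : G → Y` is proximally continuous for the right uniformity of `G`: for every bounded
uniformly continuous `φ : Y → ℝ`, the composition `φ ∘ f` is right uniformly continuous. -/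
def RightProxCont {G : Type*} [Group G] (t : TopologicalSpace G) {Y : Type*} [UniformSpace Y]
    (f : G → Y) : Prop :=
  ∀ φ : Y → ℝ, UniformContinuous φ → (∃ C, ∀ y, |φ y| ≤ C) → RightUC t (φ ∘ f)

/-- A topological group is proximally fine with respect to its right uniformity if every
proximally continuous map into any uniform space is uniformly continuous. -/
def ProxFineGroup {G : Type*} [Group G] (t : TopologicalSpace G) : Prop :=
  ∀ (Y : Type v) [UniformSpace Y] (f : G → Y), RightProxCont t f → RightUC t f

/-- A subset `A` of a topological space `X` is relatively o-radial in `X` if for every family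
`(O i)` of open sets and every `a ∈ A` with `a ∈ closure (⋃ i, O i ∩ A)` and `a ∉ closure (O i)`
for all `i`, there is `J ⊆ I` of regular cardinality such that `a ∈ closure (⋃ j ∈ L, O j)`
for every `L ⊆ J` of the same cardinality as `J`. -/
def RelORadial {X : Type u} [TopologicalSpace X] (A : Set X) : Prop :=
  ∀ {ι : Type u} (O : ι → Set X) (a : X), a ∈ A → (∀ i, IsOpen (O i)) →
    a ∈ closure (⋃ i, O i ∩ A) → (∀ i, a ∉ closure (O i)) →
    ∃ J : Set ι, (Cardinal.mk J).IsRegular ∧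
      ∀ L : Set ι, L ⊆ J → Cardinal.mk L = Cardinal.mk J → a ∈ closure (⋃ j ∈ L, O j)

/-- `X` is strongly functionally generated by the collection `M` of subsets of `X` if every
discontinuous real-valued function on `X` has discontinuous restriction to some `A ∈ M`
(as a map on the subspace `A`). -/
def StrongFunGen (X : Type*) [TopologicalSpace X] (M : Set (Set X)) : Prop :=
  ∀ f : X → ℝ, ¬Continuous f → ∃ A ∈ M, ¬ContinuousOn f A

/-!
Suppose `f` is proximally continuous but not right uniformly continuous. Passing to a coarser
pseudometric uniformity we may assume the target is a pseudometric space; then `f` is continuous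
and its right displacement `t ↦ sup_h d(f (t h), f h)` is lower semicontinuous, vanishes at `1`,
but is discontinuous there. By strong functional generation it jumps up at some point `b` along a
relatively o-radial set `A`: arbitrarily close to `b` there are `x` and `h` with `f (x h)` far from
`f (b h)`. O-radiality turns these witnesses into a family of regular size `κ` every
`κ`-subfamily of which accumulates at `b`. A maximal-independent-set and pigeonhole argument then
finds a `κ`-subfamily on which one bounded Lipschitz function `φ` separates the two values, which
contradicts the right uniform continuity of `φ ∘ f` at `b`.
-/

open Filter Set Topology Uniformity Metric Cardinal
open scoped SetRel

section Pseudometric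

variable {Y : Type v} [UniformSpace Y]

theorem exists_seq_isSymm_comp_subset {V : SetRel Y Y} (hV : V ∈ 𝓤 Y) :
    ∃ W : ℕ → SetRel Y Y, (∀ n, W n ∈ 𝓤 Y) ∧ (∀ n, (W n).IsSymm) ∧ W 0 ⊆ V ∧
      ∀ n, W (n + 1) ○ W (n + 1) ⊆ W n := by
  choose! half half_mem half_symm half_comp using
    fun s (hs : s ∈ 𝓤 Y) => comp_symm_mem_uniformity_sets hs
  have hmem : ∀ n, half^[n] V ∈ 𝓤 Y := fun n => by
    induction n with
    | zero => exact hV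
    | succ n ih => rw [Function.iterate_succ_apply']; exact half_mem _ ih
  refine ⟨fun n => half (half^[n] V), fun n => half_mem _ (hmem n),
    fun n => half_symm _ (hmem n),
    (subset_comp_self_of_mem_uniformity (half_mem V hV)).trans (half_comp V hV), fun n => ?_⟩
  simp only [Function.iterate_succ_apply']
  exact half_comp _ (half_mem _ (hmem n))

theorem exists_pseudoMetricSpace_of_mem_uniformity {V : SetRel Y Y} (hV : V ∈ 𝓤 Y) :
    ∃ (X : Type v) (_ : PseudoMetricSpace X) (e : Y → X), UniformContinuous e ∧
      ∃ ε > 0, ∀ y z, dist (e y) (e z) < ε → (y, z) ∈ V := by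
  obtain ⟨W, hW, hWsymm, hWV, hWcomp⟩ := exists_seq_isSymm_comp_subset hV
  have hbasis : (⨅ n, 𝓟 (W n)).HasBasis (fun _ => True) W :=
    hasBasis_iInf_principal (antitone_nat_of_succ_le fun n =>
      (subset_comp_self_of_mem_uniformity (hW (n + 1))).trans (hWcomp n)).directed_ge
  let u : UniformSpace Y := .ofCore <| .mk' (⨅ n, 𝓟 (W n))
    (fun r hr x => by
      obtain ⟨n, -, hn⟩ := hbasis.mem_iff.1 hr
      exact hn (refl_mem_uniformity (hW n)))
    (fun r hr => by
      obtain ⟨n, -, hn⟩ := hbasis.mem_iff.1 hr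
      exact hbasis.mem_iff.2 ⟨n, trivial, fun p hp => hn ((hWsymm n).symm _ _ hp)⟩)
    (fun r hr => by
      obtain ⟨n, -, hn⟩ := hbasis.mem_iff.1 hr
      exact ⟨W (n + 1), hbasis.mem_of_mem trivial, (hWcomp n).trans hn⟩)
  obtain ⟨m, hm⟩ := @UniformSpace.metrizable_uniformity Y u (iInf.isCountablyGenerated _)
  have hVm : V ∈ @uniformity Y m.toUniformSpace := by
    rw [hm]; exact mem_of_superset (hbasis.mem_of_mem trivial) hWV
  obtain ⟨ε, hε, hεV⟩ := (@Metric.mem_uniformity_dist Y m V).1 hVm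
  refine ⟨Y, m, id, fun s hs => ?_, ε, hε, fun y z h => hεV h⟩
  rw [hm] at hs
  obtain ⟨n, -, hn⟩ := hbasis.mem_iff.1 hs
  exact mem_of_superset (hW n) hn

end Pseudometric

theorem LowerSemicontinuous.exists_mem_closure_of_not_continuousWithinAt {α : Type*}
    [TopologicalSpace α] {F : α → ℝ} (hF : LowerSemicontinuous F) {A : Set α} {b : α}
    (h : ¬ContinuousWithinAt F A b) :
    ∃ δ > 0, b ∈ closure {x | x ∈ A ∧ F b + δ < F x} := by
  by_contra! hc
  refine h (tendsto_order.2 ⟨fun c hc' => nhdsWithin_le_nhds (hF b c hc'), fun c hc' => ?_⟩)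
  have hfar := hc ((c - F b) / 2) (by linarith)
  rw [mem_closure_iff_frequently, not_frequently] at hfar
  filter_upwards [nhdsWithin_le_nhds hfar, self_mem_nhdsWithin] with x hx hxA
  have : ¬F b + (c - F b) / 2 < F x := fun h' => hx ⟨hxA, h'⟩
  linarith

theorem Cardinal.IsRegular.exists_pairwise_or_star {ι : Type u} {J : Set ι} (hJ : (#J).IsRegular)
    (R : ι → ι → Prop) :
    (∃ S ⊆ J, #S = #J ∧ S.Pairwise fun i k => ¬R i k) ∨
      ∃ k, ∃ S ⊆ J, #S = #J ∧ ((∀ i ∈ S, R i k) ∨ ∀ i ∈ S, R k i) := by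
  classical
  obtain ⟨M, hM⟩ :=
    zorn_subset {S | S ⊆ J ∧ S.Pairwise fun i k => ¬R i k} fun c hc hchain =>
      ⟨⋃₀ c, ⟨sUnion_subset fun s hs => (hc hs).1,
        (pairwise_sUnion hchain.directedOn).2 fun s hs => (hc hs).2⟩,
        fun s hs => subset_sUnion_of_mem hs⟩
  obtain ⟨hMJ, hMpair⟩ := hM.prop
  rcases (mk_le_mk_of_subset hMJ).lt_or_eq with hMlt | hMeq
  swap
  · exact Or.inl ⟨M, hMJ, hMeq, hMpair⟩
  right
  have hrel : ∀ i : ↥(J \ M), ∃ k : M, R i k ∨ R k i := by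
    rintro ⟨i, hiJ, hiM⟩
    by_contra! h
    exact hiM (hM.mem_of_prop_insert
      ⟨insert_subset hiJ hMJ, hMpair.insert fun k hk _ => h ⟨k, hk⟩⟩)
  choose v hv using hrel
  have hdiff : #J ≤ #↥(J \ M) := by
    refine le_of_not_gt fun hlt => ?_
    have hcover : J ⊆ M ∪ J \ M := by rw [union_sdiff_self]; exact subset_union_right
    exact ((mk_le_mk_of_subset hcover).trans (mk_union_le M (J \ M))).not_gt
      (add_lt_of_lt hJ.aleph0_le hMlt hlt)
  have hlabels : #(↥M × Bool) < (#J).ord.cof := by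
    rw [hJ.cof_ord, mk_prod, mk_bool, lift_uzero, lift_ofNat]
    exact mul_lt_of_lt hJ.aleph0_le hMlt ((natCast_lt_aleph0 (n := 2)).trans_le hJ.aleph0_le)
  obtain ⟨⟨k, side⟩, T, hTJM, hT, hTv⟩ := infinite_pigeonhole_set
    (fun i => (v i, decide (R i (v i)))) #J hdiff hJ.aleph0_le hlabels
  have hTJ : T ⊆ J := hTJM.trans sdiff_subset
  refine ⟨k, T, hTJ, le_antisymm (mk_le_mk_of_subset hTJ) hT, ?_⟩
  cases side
  · refine Or.inr fun i hi => ?_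
    obtain ⟨hvk, hside⟩ := Prod.mk.inj (hTv hi)
    rw [← hvk]
    exact (hv _).resolve_left (by simpa using hside)
  · refine Or.inl fun i hi => ?_
    obtain ⟨hvk, hside⟩ := Prod.mk.inj (hTv hi)
    rw [← hvk]
    simpa using hside

section Separation

variable {X : Type*} [PseudoMetricSpace X]

noncomputable def truncInfDist (s : Set X) (c : ℝ) (x : X) : ℝ := min (infDist x s) c

theorem lipschitzWith_truncInfDist (s : Set X) (c : ℝ) : LipschitzWith 1 (truncInfDist s c) :=
  (lipschitz_infDist_pt s).min_const c

theorem abs_truncInfDist_le {c : ℝ} (hc : 0 ≤ c) (s : Set X) (x : X) :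
    |truncInfDist s c x| ≤ c := by
  have : 0 ≤ truncInfDist s c x := le_min infDist_nonneg hc
  exact abs_le.2 ⟨by linarith, min_le_right _ _⟩

theorem le_dist_truncInfDist_singleton {a w c : X} {g : ℝ} (hac : dist a c < g / 4)
    (haw : g ≤ dist a w) : g / 4 ≤ dist (truncInfDist {c} g a) (truncInfDist {c} g w) := by
  simp only [truncInfDist, infDist_singleton, Real.dist_eq]
  have hwc : g - g / 4 ≤ dist w c := by
    linarith [dist_triangle a c w, dist_comm w c]
  have hg : 0 < g := by linarith [dist_nonneg (x := a) (y := c)]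
  linarith [neg_abs_le (min (dist a c) g - min (dist w c) g), min_le_left (dist a c) g,
    le_min hwc (by linarith : g - g / 4 ≤ g)]

theorem exists_lipschitzWith_separating_of_isRegular {ι : Type u} {J : Set ι}
    (hJ : (#J).IsRegular) (y z : ι → X) {g : ℝ} (hg : 0 ≤ g)
    (hyz : ∀ i ∈ J, g ≤ dist (y i) (z i)) :
    ∃ S ⊆ J, #S = #J ∧ ∃ φ : X → ℝ, LipschitzWith 1 φ ∧ (∃ C, ∀ x, |φ x| ≤ C) ∧
      ∀ i ∈ S, g / 4 ≤ dist (φ (y i)) (φ (z i)) := by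
  have hφ (s : Set X) := lipschitzWith_truncInfDist s g
  have hbdd (s : Set X) : ∃ C, ∀ x, |truncInfDist s g x| ≤ C :=
    ⟨g, abs_truncInfDist_le hg s⟩
  obtain ⟨S, hSJ, hS, hpair⟩ | ⟨k, S, hSJ, hS, hk | hk⟩ :=
    hJ.exists_pairwise_or_star fun i k => dist (y i) (z k) < g / 4
  · refine ⟨S, hSJ, hS, truncInfDist (z '' S) g, hφ _, hbdd _, fun i hi => ?_⟩
    have hz : truncInfDist (z '' S) g (z i) = 0 := by
      simp [truncInfDist, infDist_zero_of_mem (mem_image_of_mem z hi), hg]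
    have hy : g / 4 ≤ truncInfDist (z '' S) g (y i) := by
      refine le_min ((le_infDist ⟨_, mem_image_of_mem z hi⟩).2 ?_) (by linarith)
      rintro _ ⟨k, hk, rfl⟩
      rcases eq_or_ne i k with rfl | hik
      · linarith [hyz i (hSJ hi)]
      · exact not_lt.1 (hpair hi hk hik)
    rw [hz, Real.dist_eq, sub_zero]
    exact hy.trans (le_abs_self _)
  · exact ⟨S, hSJ, hS, truncInfDist {z k} g, hφ _, hbdd _, fun i hi =>
      le_dist_truncInfDist_singleton (hk i hi) (hyz i (hSJ hi))⟩
  · refine ⟨S, hSJ, hS, truncInfDist {y k} g, hφ _, hbdd _, fun i hi => ?_⟩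
    rw [dist_comm]
    exact le_dist_truncInfDist_singleton (by rw [dist_comm]; exact hk i hi)
      (by rw [dist_comm]; exact hyz i (hSJ hi))

end Separation

section RightUniformity

variable {G : Type*} [Group G] [TopologicalSpace G]

theorem RightProxCont.comp {Y Z : Type*} [UniformSpace Y] [UniformSpace Z] {f : G → Y}
    {e : Y → Z} (hf : RightProxCont ‹_› f) (he : UniformContinuous e) :
    RightProxCont ‹_› (e ∘ f) :=
  fun φ hφ ⟨C, hC⟩ => hf (φ ∘ e) (hφ.comp he) ⟨C, fun y => hC (e y)⟩

theorem RightProxCont.rightUC_truncInfDist {X : Type*} [PseudoMetricSpace X] {f : G → X}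
    (hf : RightProxCont ‹_› f) (s : Set X) {c : ℝ} (hc : 0 ≤ c) :
    RightUC ‹_› (truncInfDist s c ∘ f) :=
  hf _ (lipschitzWith_truncInfDist s c).uniformContinuous ⟨c, abs_truncInfDist_le hc s⟩

variable [IsTopologicalGroup G]

theorem RightUC.continuous {Y : Type*} [UniformSpace Y] {f : G → Y} (hf : RightUC ‹_› f) :
    Continuous f := by
  refine continuous_iff_continuousAt.2 fun b => Uniform.continuousAt_iff'_right.2 fun V hV => ?_
  obtain ⟨U, hU, hUV⟩ := hf V hV
  have hb : Tendsto (fun x => b * x⁻¹) (𝓝 b) (𝓝 1) := by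
    simpa using (continuous_const.mul continuous_inv).tendsto (f := fun x : G => b * x⁻¹) b
  exact mem_map.2 (mem_of_superset (hb hU) fun x hx => hUV b x hx)

theorem RightProxCont.continuous {X : Type*} [PseudoMetricSpace X] {f : G → X}
    (hf : RightProxCont ‹_› f) : Continuous f := by
  refine continuous_iff_continuousAt.2 fun b => Metric.tendsto_nhds.2 fun ε hε => ?_
  have hφ := (hf.rightUC_truncInfDist {f b} hε.le).continuous.continuousAt (x := b)
  have hφb : truncInfDist {f b} ε (f b) = 0 := by simp [truncInfDist, hε.le]
  filter_upwards [hφ.eventually (gt_mem_nhds (hφb ▸ hε))] with x hx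
  simpa [truncInfDist, lt_irrefl] using hx

end RightUniformity

section RightDisplacement

variable {G : Type*} [Group G] {X : Type*} [PseudoMetricSpace X] {f : G → X}

/-- Distances are truncated at `1`: an unbounded `⨆` in `ℝ` would be `0`. -/
noncomputable def rightDisplacement (f : G → X) (t : G) : ℝ :=
  ⨆ h, min (dist (f (t * h)) (f h)) 1

theorem bddAbove_range_min_dist_one (f : G → X) (t : G) :
    BddAbove (range fun h => min (dist (f (t * h)) (f h)) 1) :=
  ⟨1, by rintro _ ⟨h, rfl⟩; exact min_le_right _ _⟩

theorem min_dist_le_rightDisplacement (f : G → X) (t h : G) :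
    min (dist (f (t * h)) (f h)) 1 ≤ rightDisplacement f t :=
  le_ciSup (bddAbove_range_min_dist_one f t) h

theorem rightDisplacement_le_one (f : G → X) (t : G) : rightDisplacement f t ≤ 1 :=
  ciSup_le fun _ => min_le_right _ _

theorem rightDisplacement_one (f : G → X) : rightDisplacement f 1 = 0 := by
  simp [rightDisplacement]

theorem exists_lt_dist_of_add_lt_rightDisplacement {b x : G} {δ : ℝ}
    (hbx : rightDisplacement f b + δ < rightDisplacement f x) :
    ∃ h, δ < dist (f (x * h)) (f (b * h)) := by
  obtain ⟨h, hh⟩ := exists_lt_of_lt_ciSup hbx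
  refine ⟨h, ?_⟩
  rcases lt_or_ge δ 0 with hδ | hδ
  · exact hδ.trans_le dist_nonneg
  have hb1 : rightDisplacement f b < 1 := by linarith [hh.trans_le (min_le_right _ _)]
  have hb : dist (f (b * h)) (f h) ≤ rightDisplacement f b := le_of_not_gt fun hlt =>
    (lt_min hlt hb1).not_ge (min_dist_le_rightDisplacement f b h)
  have hx := hh.trans_le (min_le_left _ _)
  linarith [dist_triangle (f (x * h)) (f (b * h)) (f h)]

variable [TopologicalSpace G]

theorem lowerSemicontinuous_rightDisplacement [ContinuousMul G] (hf : Continuous f) :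
    LowerSemicontinuous (rightDisplacement f) :=
  lowerSemicontinuous_ciSup (bddAbove_range_min_dist_one f) fun h =>
    (by fun_prop : Continuous fun t => min (dist (f (t * h)) (f h)) 1).lowerSemicontinuous

theorem rightUC_of_continuousAt_rightDisplacement
    (hf : ContinuousAt (rightDisplacement f) 1) : RightUC ‹_› f := by
  intro V hV
  obtain ⟨ε, hε, hεV⟩ := mem_uniformity_dist.1 hV
  refine ⟨_, hf.preimage_mem_nhds (gt_mem_nhds (?_ : rightDisplacement f 1 < min ε 1)),
    fun g h hgh => hεV ?_⟩
  · simpa [rightDisplacement_one] using hε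
  · have := (min_dist_le_rightDisplacement f (g * h⁻¹) h).trans_lt hgh
    rw [inv_mul_cancel_right, min_lt_min_left_iff] at this
    exact this.1

end RightDisplacement

theorem RightProxCont.not_mem_closure_of_relORadial {G : Type u} [Group G] [TopologicalSpace G]
    [IsTopologicalGroup G] {X : Type*} [PseudoMetricSpace X] {f : G → X}
    (hf : RightProxCont ‹_› f) {A : Set G} (hA : RelORadial A) {b : G} (hb : b ∈ A) {δ : ℝ}
    (hδ : 0 < δ) : b ∉ closure {x | x ∈ A ∧ ∃ h, δ < dist (f (x * h)) (f (b * h))} := by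
  intro hbA
  have hfc := hf.continuous
  -- `i = (h, p)`: the translate `f (· * h)` near the anchor `f p`, which is far from `f (b * h)`
  let ι := {i : G × G // δ ≤ dist (f i.2) (f (b * i.1))}
  let O : ι → Set G := fun i => {t | dist (f (t * i.1.1)) (f i.1.2) < δ / 8}
  have hO : ∀ i, IsOpen (O i) := fun i => isOpen_lt (by fun_prop) continuous_const
  have hbO : ∀ i, b ∉ closure (O i) := fun i hi => by
    have : dist (f (b * i.1.1)) (f i.1.2) ≤ δ / 8 :=
      closure_lt_subset_le (by fun_prop) continuous_const hi
    linarith [i.2, dist_comm (f i.1.2) (f (b * i.1.1))]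
  have hbU : b ∈ closure (⋃ i, O i ∩ A) := by
    refine closure_mono ?_ hbA
    rintro x ⟨hxA, h, hh⟩
    exact mem_iUnion.2 ⟨⟨(h, x * h), hh.le⟩, by simp [O, hδ], hxA⟩
  obtain ⟨J, hJ, hJO⟩ := hA O b hb hO hbU hbO
  obtain ⟨S, hSJ, hS, φ, hφ, hφC, hφS⟩ := exists_lipschitzWith_separating_of_isRegular hJ
    (fun i => f i.1.2) (fun i => f (b * i.1.1)) hδ.le fun i _ => i.2
  obtain ⟨U, hU, hUφ⟩ :=
    hf φ hφ.uniformContinuous hφC _ (dist_mem_uniformity (by positivity : 0 < δ / 8))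
  have hW : {t | t * b⁻¹ ∈ U} ∈ 𝓝 b :=
    (continuous_mul_const b⁻¹).continuousAt.preimage_mem_nhds (by simpa using hU)
  obtain ⟨t, htW, ht⟩ := mem_closure_iff_nhds.1 (hJO S hSJ hS) _ hW
  obtain ⟨i, hiS, hti⟩ := mem_iUnion₂.1 ht
  have h1 : dist (φ (f (t * i.1.1))) (φ (f (b * i.1.1))) < δ / 8 :=
    hUφ _ _ (by simpa [mul_assoc] using htW)
  have h2 : dist (φ (f (t * i.1.1))) (φ (f i.1.2)) < δ / 8 := by
    have := hφ.dist_le_mul (f (t * i.1.1)) (f i.1.2)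
    rw [NNReal.coe_one, one_mul] at this
    exact this.trans_lt hti
  linarith [hφS i hiS, dist_triangle_left (φ (f i.1.2)) (φ (f (b * i.1.1))) (φ (f (t * i.1.1)))]

theorem rightUC_of_rightProxCont {G : Type u} [Group G] [TopologicalSpace G] [IsTopologicalGroup G]
    (hgen : StrongFunGen G {A : Set G | RelORadial A}) {X : Type*} [PseudoMetricSpace X]
    {f : G → X} (hf : RightProxCont ‹_› f) : RightUC ‹_› f := by
  by_contra hnot
  obtain ⟨A, hA, hFA⟩ := hgen (rightDisplacement f) fun h =>
    hnot (rightUC_of_continuousAt_rightDisplacement h.continuousAt)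
  obtain ⟨b, hbA, hb⟩ : ∃ b ∈ A, ¬ContinuousWithinAt (rightDisplacement f) A b := by
    simpa [ContinuousOn] using hFA
  obtain ⟨δ, hδ, hjump⟩ := (lowerSemicontinuous_rightDisplacement hf.continuous
    ).exists_mem_closure_of_not_continuousWithinAt hb
  refine hf.not_mem_closure_of_relORadial hA hbA hδ (closure_mono ?_ hjump)
  rintro x ⟨hxA, hx⟩
  exact ⟨hxA, exists_lt_dist_of_add_lt_rightDisplacement hx⟩

/-- Theorem 2.4(2): a topological group strongly functionally generated by its relatively
o-radial subsets is proximally fine. -/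
theorem stmt_4 {G : Type u} [Group G] [TopologicalSpace G] [IsTopologicalGroup G]
    (hgen : StrongFunGen G {A : Set G | RelORadial A}) :
    ProxFineGroup ‹TopologicalSpace G› := by
  intro Y _ f hf V hV
  obtain ⟨X, _, e, he, ε, hε, heV⟩ := exists_pseudoMetricSpace_of_mem_uniformity hV
  obtain ⟨U, hU, hUε⟩ := rightUC_of_rightProxCont hgen (hf.comp he) _ (dist_mem_uniformity hε)
  exact ⟨U, hU, fun g h hgh => heV _ _ (hUε g h hgh)⟩
end

section
/- Let G be a topological group such that for every discontinuous bounded function α : G → ℝ there exists a set A ⊆ G satisfying at least one of: (1) the restriction of α to closure(A) has no continuous extension to G, and A·A⁻¹ is relatively o-radial in G; (2) the restriction of α to closure(A) is discontinuous at some point of A, and A is relatively o-radial in G. Let X be a set with a left action of G, (Y, 𝒱) a uniform space, and f : X → Y a right proximally continuous function. Then f is right uniformly continuous. -/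
open Pointwise

universe u v

universe w

/-- For a `G`-set `X`, `f : X → Y` is right uniformly continuous if for every entourage `V`
of `Y` there is a neighborhood `U` of the identity of `G` such that `(f (g • x), f (h • x)) ∈ V`
for all `x ∈ X` whenever `g * h⁻¹ ∈ U`. -/
def RightUCAct {G : Type*} [Group G] (t : TopologicalSpace G) {X : Type*} [MulAction G X]
    {Y : Type*} [UniformSpace Y] (f : X → Y) : Prop :=
  ∀ V ∈ uniformity Y, ∃ U ∈ @nhds G t 1,
    ∀ g h : G, g * h⁻¹ ∈ U → ∀ x : X, (f (g • x), f (h • x)) ∈ V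

/-- For a `G`-set `X`, `f : X → Y` is right proximally continuous if for every bounded
uniformly continuous `φ : Y → ℝ`, the map `φ ∘ f` is right uniformly continuous. -/
def RightProxContAct {G : Type*} [Group G] (t : TopologicalSpace G) {X : Type*} [MulAction G X]
    {Y : Type*} [UniformSpace Y] (f : X → Y) : Prop :=
  ∀ φ : Y → ℝ, UniformContinuous φ → (∃ C, ∀ y, |φ y| ≤ C) → RightUCAct t (φ ∘ f)

/-!
Composing with a uniformly continuous map into a pseudometric space of diameter at most `1`, we
may assume that the target is such a space `Z`. The displacement
`α g = ⨆ x, dist (F (g • x)) (F x)` is lower semicontinuous and subadditive, and `F` is right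
uniformly continuous as soon as `α` is continuous.

The core fact: if `A` is relatively o-radial and `a ∈ A`, then `F (b • x) → F (a • x)` uniformly
in `x` as `b → a` within `A`. Otherwise the open sets `{g | dist (F (g • x)) z < ε / 6}` with
`ε ≤ dist (F (a • x)) z` accumulate at `a` along `A` while their closures miss `a`; radiality
yields an index set of regular cardinality `κ` all of whose subfamilies of size `κ` still
accumulate at `a`, and a free-set argument on `κ` produces `T ⊆ Z` whose distance function,
bounded and uniformly continuous, contradicts right proximal continuity on one of them.

In case (2) the core fact makes `α` upper semicontinuous within `closure A` at `a`. In case (1),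
applied at `1 ∈ A * A⁻¹`, it makes `α` right uniformly continuous on `closure A`; for a continuous
pseudometric on `G` adapted to this modulus, `α` is Lipschitz on `closure A`, hence extends.
-/

open Filter Set Topology Uniformity Metric Cardinal
open scoped NNReal SetRel

section Metrization

variable {T : Type u}

theorem subset_comp_comp_self_of_mem_uniformity [UniformSpace T] {s : Set (T × T)}
    (hs : s ∈ 𝓤 T) : s ⊆ s ○ s ○ s :=
  (subset_comp_self_of_mem_uniformity hs).trans <|
    SetRel.comp_subset_comp_left (subset_comp_self_of_mem_uniformity hs)

theorem exists_symm_comp_comp_subset_chain [UniformSpace T] (V : ℕ → Set (T × T))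
    (hV : ∀ n, V n ∈ 𝓤 T) :
    ∃ W : ℕ → Set (T × T), (∀ n, W n ∈ 𝓤 T) ∧ (∀ n, SetRel.IsSymm (W n)) ∧ (∀ n, W n ⊆ V n) ∧
      ∀ n, W (n + 1) ○ W (n + 1) ○ W (n + 1) ⊆ W n := by
  choose! t ht htsymm htcomp using fun s (hs : s ∈ 𝓤 T) => comp_comp_symm_mem_uniformity_sets hs
  let w : ℕ → Set (T × T) := fun n => Nat.rec univ (fun k s => t (s ∩ V k)) n
  have hw : ∀ n, w n ∈ 𝓤 T := fun n => by
    induction n with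
    | zero => exact univ_mem
    | succ k ih => exact ht _ (inter_mem ih (hV k))
  have hwcomp : ∀ n, w (n + 1) ○ w (n + 1) ○ w (n + 1) ⊆ w n ∩ V n := fun n =>
    htcomp _ (inter_mem (hw n) (hV n))
  refine ⟨fun n => w (n + 1), fun n => hw (n + 1),
    fun n => htsymm _ (inter_mem (hw n) (hV n)), fun n => ?_,
    fun n => (hwcomp (n + 1)).trans inter_subset_left⟩
  exact (subset_comp_comp_self_of_mem_uniformity (hw (n + 1))).trans
    ((hwcomp n).trans inter_subset_right)

variable {W : ℕ → Set (T × T)}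

open Classical in
/-- Frink's distance of a chain of entourages, see `UniformSpace.metrizable_uniformity`. -/
noncomputable def chainDist (W : ℕ → Set (T × T)) (x y : T) : ℝ≥0 :=
  if h : ∃ n, (x, y) ∉ W n then 2⁻¹ ^ Nat.find h else 0

theorem two_inv_pow_le_chainDist_iff (hW : Antitone W) {x y : T} {n : ℕ} :
    2⁻¹ ^ n ≤ chainDist W x y ↔ (x, y) ∉ W n := by
  classical
  unfold chainDist
  split_ifs with h
  · rw [pow_le_pow_iff_right_of_lt_one₀ (by norm_num) (by norm_num), Nat.find_le_iff]
    exact ⟨fun ⟨m, hmn, hm⟩ hn => hm (hW hmn hn), fun h => ⟨n, le_rfl, h⟩⟩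
  · push Not at h
    simp [h n]

theorem chainDist_le_one (x y : T) : chainDist W x y ≤ 1 := by
  unfold chainDist
  split_ifs
  exacts [pow_le_one₀ zero_le (by norm_num), zero_le_one]

theorem chainDist_self (hW : ∀ n x, (x, x) ∈ W n) (x : T) : chainDist W x x = 0 :=
  dif_neg fun ⟨n, hn⟩ => hn (hW n x)

theorem chainDist_comm (hW : ∀ n, SetRel.IsSymm (W n)) (x y : T) :
    chainDist W x y = chainDist W y x := by
  have hcomm : ∀ {n}, (x, y) ∉ W n ↔ (y, x) ∉ W n := fun {n} =>
    have := hW n; not_congr (SetRel.comm (W n))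
  classical
  unfold chainDist
  by_cases h : ∃ n, (x, y) ∉ W n
  · have h' : ∃ n, (y, x) ∉ W n := h.imp fun _ => hcomm.1
    rw [dif_pos h, dif_pos h', Nat.find_congr' hcomm]
  · have h' : ¬∃ n, (y, x) ∉ W n := fun h' => h (h'.imp fun _ => hcomm.2)
    rw [dif_neg h, dif_neg h']

theorem chainDist_le_two_mul_max (hW : Antitone W)
    (hcomp : ∀ n, W (n + 1) ○ W (n + 1) ○ W (n + 1) ⊆ W n) (x₁ x₂ x₃ x₄ : T) :
    chainDist W x₁ x₄ ≤
      2 * max (chainDist W x₁ x₂) (max (chainDist W x₂ x₃) (chainDist W x₃ x₄)) := by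
  classical
  by_cases H : ∃ n, (x₁, x₄) ∉ W n
  · rw [chainDist, dif_pos H, ← div_le_iff₀' zero_lt_two, div_eq_mul_inv, ← pow_succ]
    simp only [le_max_iff, two_inv_pow_le_chainDist_iff hW, ← not_and_or]
    rintro ⟨h₁₂, h₂₃, h₃₄⟩
    exact Nat.find_spec H (hcomp _ ⟨x₃, ⟨x₂, h₁₂, h₂₃⟩, h₃₄⟩)
  · rw [chainDist, dif_neg H]
    exact zero_le

theorem exists_pseudoMetricSpace_uniformContinuous [UniformSpace T] (V : ℕ → Set (T × T))
    (hV : ∀ n, V n ∈ 𝓤 T) :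
    ∃ (Z : Type u) (_ : PseudoMetricSpace Z) (π : T → Z), UniformContinuous π ∧
      (∀ z z' : Z, dist z z' ≤ 1) ∧ ∀ n x y, dist (π x) (π y) < 2⁻¹ ^ (n + 1) → (x, y) ∈ V n := by
  obtain ⟨W, hWU, hWsymm, hWV, hWcomp⟩ := exists_symm_comp_comp_subset_chain V hV
  have hW_anti : Antitone W := antitone_nat_of_succ_le fun n =>
    (subset_comp_comp_self_of_mem_uniformity (hWU (n + 1))).trans (hWcomp n)
  let I := PseudoMetricSpace.ofPreNNDist (chainDist W)
    (chainDist_self fun n _ => refl_mem_uniformity (hWU n)) (chainDist_comm hWsymm)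
  have hdist_le : ∀ x y, @dist T I.toDist x y ≤ chainDist W x y :=
    PseudoMetricSpace.dist_ofPreNNDist_le _ _ _
  have hle_dist : ∀ x y, (chainDist W x y : ℝ) ≤ 2 * @dist T I.toDist x y :=
    PseudoMetricSpace.le_two_mul_dist_ofPreNNDist _ _ _ (chainDist_le_two_mul_max hW_anti hWcomp)
  refine ⟨T, I, id, ?_, fun x y => (hdist_le x y).trans (by exact_mod_cast chainDist_le_one x y),
    fun n x y hxy => hWV n ?_⟩
  · refine (@Metric.uniformity_basis_dist T I).tendsto_right_iff.2 fun ε hε => ?_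
    obtain ⟨n, hn⟩ := exists_pow_lt_of_lt_one hε (by norm_num : (2⁻¹ : ℝ) < 1)
    filter_upwards [hWU n] with p hp
    refine (hdist_le _ _).trans_lt (lt_of_lt_of_le ?_ hn.le)
    exact_mod_cast not_le.1 (mt (two_inv_pow_le_chainDist_iff hW_anti).1 (not_not.2 hp))
  · by_contra hn
    have h2 : (2⁻¹ : ℝ) ^ n ≤ chainDist W x y := by
      exact_mod_cast (two_inv_pow_le_chainDist_iff hW_anti).2 hn
    have := hle_dist x y
    rw [id, id, pow_succ] at hxy
    linarith

end Metrization

theorem exists_pseudoMetricSpace_continuous_of_mem_nhds_one {G : Type u} [Group G]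
    [TopologicalSpace G] [IsTopologicalGroup G] (U : ℕ → Set G) (hU : ∀ n, U n ∈ 𝓝 (1 : G)) :
    ∃ (Z : Type u) (_ : PseudoMetricSpace Z) (π : G → Z), Continuous π ∧
      ∀ n g h, dist (π g) (π h) < 2⁻¹ ^ (n + 1) → g * h⁻¹ ∈ U n := by
  let := IsTopologicalGroup.rightUniformSpace G
  obtain ⟨Z, _, π, hπ, -, hπU⟩ := exists_pseudoMetricSpace_uniformContinuous
    (fun n => (fun p : G × G => p.2 * p.1⁻¹) ⁻¹' (U n)⁻¹)
    fun n => preimage_mem_comap (inv_mem_nhds_one G (hU n))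
  refine ⟨Z, _, π, hπ.continuous, fun n g h hgh => ?_⟩
  simpa using hπU n g h hgh

theorem le_two_mul_of_forall_lt_two_inv_pow {r t : ℝ} (hr : 0 ≤ r) (ht : t ≤ 1)
    (h : ∀ n : ℕ, r < 2⁻¹ ^ (n + 1) → t ≤ 2⁻¹ ^ (n + 1)) : t ≤ 2 * r := by
  by_contra! hlt
  obtain ⟨n, hn, htn⟩ :=
    exists_nat_pow_near_of_lt_one (by linarith) ht (by norm_num : (0 : ℝ) < 2⁻¹) (by norm_num)
  have := h n (by rw [pow_succ]; linarith)
  linarith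

theorem exists_continuous_eqOn_of_le_mul_dist {T Z : Type*} [TopologicalSpace T]
    [PseudoMetricSpace Z] {π : T → Z} (hπ : Continuous π) {S : Set T} {α : T → ℝ} {K : ℝ≥0}
    (h : ∀ b ∈ S, ∀ b' ∈ S, dist (α b) (α b') ≤ K * dist (π b) (π b')) :
    ∃ β : T → ℝ, Continuous β ∧ EqOn β α S := by
  rcases isEmpty_or_nonempty T with hT | hT
  · exact ⟨0, continuous_const, fun b => isEmptyElim b⟩
  let α' : Z → ℝ := fun z => α (Function.invFunOn π S z)
  have hα' : ∀ b ∈ S, α' (π b) = α b := fun b hb => by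
    have hex : ∃ b' ∈ S, π b' = π b := ⟨b, hb, rfl⟩
    have := h _ (Function.invFunOn_mem hex) b hb
    rwa [Function.invFunOn_eq hex, dist_self, mul_zero, dist_le_zero] at this
  have hlip : LipschitzOnWith K α' (π '' S) := LipschitzOnWith.of_dist_le_mul <| by
    rintro _ ⟨b, hb, rfl⟩ _ ⟨b', hb', rfl⟩
    rw [hα' b hb, hα' b' hb']
    exact h b hb b' hb'
  obtain ⟨β, hβ, hβα⟩ := hlip.extend_real
  exact ⟨β ∘ π, hβ.continuous.comp hπ, fun b hb => ((hβα ⟨b, hb, rfl⟩).symm.trans (hα' b hb))⟩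

theorem exists_continuous_eqOn_of_rightUniformContinuousOn {G : Type u} [Group G]
    [TopologicalSpace G] [IsTopologicalGroup G] {S : Set G} {α : G → ℝ}
    (hS : ∀ b ∈ S, ∀ b' ∈ S, |α b - α b'| ≤ 1)
    (huc : ∀ ε > 0, ∃ U ∈ 𝓝 (1 : G), ∀ b ∈ S, ∀ b' ∈ S, b * b'⁻¹ ∈ U → |α b - α b'| ≤ ε) :
    ∃ β : G → ℝ, Continuous β ∧ EqOn β α S := by
  choose U hU hUα using fun n : ℕ => huc (2⁻¹ ^ (n + 1)) (by positivity)
  obtain ⟨Z, _, π, hπ, hπU⟩ := exists_pseudoMetricSpace_continuous_of_mem_nhds_one U hU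
  refine exists_continuous_eqOn_of_le_mul_dist (K := 2) hπ fun b hb b' hb' => ?_
  exact le_two_mul_of_forall_lt_two_inv_pow dist_nonneg (hS b hb b' hb') fun n hn =>
    hUα n b hb b' hb' (hπU n b b' hn)

theorem Cardinal.exists_subset_forall_rel_of_isRegular {ι : Type u} {J : Set ι}
    (hJ : (#J).IsRegular) {r : ι → ι → Prop} (hrefl : ∀ i ∈ J, r i i)
    (hfew : ∀ i ∈ J, #{j ∈ J | ¬r i j ∨ ¬r j i} < #J) :
    ∃ M ⊆ J, #M = #J ∧ ∀ i ∈ M, ∀ j ∈ M, r i j := by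
  obtain ⟨M, ⟨hMJ, hMr⟩, hMmax⟩ := zorn_subset {M | M ⊆ J ∧ ∀ i ∈ M, ∀ j ∈ M, r i j}
    fun c hc hchain => by
      refine ⟨⋃₀ c, ⟨sUnion_subset fun L hL => (hc hL).1, ?_⟩, fun L hL => subset_sUnion_of_mem hL⟩
      rintro i ⟨L₁, hL₁, hi⟩ j ⟨L₂, hL₂, hj⟩
      rcases hchain.total hL₁ hL₂ with h | h
      exacts [(hc hL₂).2 i (h hi) j hj, (hc hL₁).2 i hi j (h hj)]
  refine ⟨M, hMJ, (mk_le_mk_of_subset hMJ).antisymm (not_lt.1 fun hlt => ?_), hMr⟩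
  have hsmall : #↥(M ∪ ⋃ i ∈ M, {j ∈ J | ¬r i j ∨ ¬r j i}) < #J :=
    (mk_union_le _ _).trans_lt <| add_lt_of_lt hJ.aleph0_le hlt <|
      (card_biUnion_lt_iff_forall_of_isRegular hJ hlt).2 fun i hi => hfew i (hMJ hi)
  obtain ⟨j, hjJ, hj⟩ := not_subset.1 fun hsub => (mk_le_mk_of_subset hsub).not_gt hsmall
  have hjM : ∀ i ∈ M, r i j ∧ r j i := fun i hi => by
    by_contra h
    exact hj (Or.inr (mem_biUnion hi ⟨hjJ, not_and_or.1 h⟩))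
  refine hj (Or.inl (hMmax ⟨insert_subset hjJ hMJ, ?_⟩ (subset_insert j M) (mem_insert j M)))
  rintro i (rfl | hi) k (rfl | hk)
  exacts [hrefl _ hjJ, (hjM k hk).2, (hjM i hi).1, hMr i hi k hk]

theorem exists_subset_infDist_sep_of_isRegular {Z : Type*} [PseudoMetricSpace Z] {ι : Type u}
    {J : Set ι} (hJ : (#J).IsRegular) (p t : ι → Z) {σ : ℝ} (hσ : 0 < σ)
    (hpt : ∀ i ∈ J, 6 * σ ≤ dist (p i) (t i)) :
    ∃ L ⊆ J, #L = #J ∧ ∃ T : Set Z, ∀ i ∈ L, ∀ q, dist q (t i) < σ →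
      σ ≤ |infDist q T - infDist (p i) T| := by
  by_contra! hnear
  -- Singletons `T` show that few `p i`, and few `t i`, lie near any given point; a free-set
  -- argument then gives `M` of full size with all `p i` far from all `t j`, and `T = t '' M`.
  have hfew_p : ∀ y, #{i ∈ J | dist (p i) y ≤ 2 * σ} < #J := fun y =>
    (mk_le_mk_of_subset (sep_subset _ _)).lt_of_ne fun hcard => by
      obtain ⟨i, ⟨hiJ, hiy⟩, q, hq, hφ⟩ := hnear _ (sep_subset _ _) hcard {y}
      rw [infDist_singleton, infDist_singleton, abs_lt] at hφ
      linarith [dist_triangle4 (p i) y q (t i), dist_comm y q, hpt i hiJ]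
  have hfew_t : ∀ z, #{i ∈ J | dist z (t i) ≤ 2 * σ} < #J := fun z =>
    (mk_le_mk_of_subset (sep_subset _ _)).lt_of_ne fun hcard => by
      obtain ⟨i, ⟨hiJ, hzi⟩, q, hq, hφ⟩ := hnear _ (sep_subset _ _) hcard {z}
      rw [infDist_singleton, infDist_singleton, abs_lt] at hφ
      linarith [dist_triangle q (t i) z, dist_triangle (p i) z (t i), dist_comm z (t i),
        hpt i hiJ]
  obtain ⟨M, hMJ, hM, hMsep⟩ := Cardinal.exists_subset_forall_rel_of_isRegular hJ
    (r := fun i j => 2 * σ < dist (p i) (t j)) (fun i hi => by linarith [hpt i hi])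
    fun i _ => by
      have hsub : {j ∈ J | ¬2 * σ < dist (p i) (t j) ∨ ¬2 * σ < dist (p j) (t i)} ⊆
          {j ∈ J | dist (p i) (t j) ≤ 2 * σ} ∪ {j ∈ J | dist (p j) (t i) ≤ 2 * σ} := by
        rintro j ⟨hjJ, hj | hj⟩
        exacts [Or.inl ⟨hjJ, not_lt.1 hj⟩, Or.inr ⟨hjJ, not_lt.1 hj⟩]
      exact (mk_le_mk_of_subset hsub).trans_lt <|
        (mk_union_le _ _).trans_lt (add_lt_of_lt hJ.aleph0_le (hfew_t (p i)) (hfew_p (t i)))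
  obtain ⟨i, hiM, q, hq, hφ⟩ := hnear M hMJ hM (t '' M)
  have hq_le : infDist q (t '' M) ≤ dist q (t i) := infDist_le_dist_of_mem (mem_image_of_mem t hiM)
  have hp_ge : 2 * σ ≤ infDist (p i) (t '' M) := (le_infDist ⟨t i, mem_image_of_mem t hiM⟩).2 <| by
    rintro _ ⟨j, hj, rfl⟩
    exact (hMsep i hiM j hj).le
  rw [abs_lt] at hφ
  linarith

theorem LowerSemicontinuous.eventually_le_nhdsWithin_closure {T γ : Type*} [TopologicalSpace T]
    [LinearOrder γ] {f : T → γ} (hf : LowerSemicontinuous f) {s : Set T} {a : T} {c : γ}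
    (h : ∀ᶠ b in 𝓝[s] a, f b ≤ c) : ∀ᶠ b in 𝓝[closure s] a, f b ≤ c := by
  rw [eventually_nhdsWithin_iff] at h ⊢
  obtain ⟨W, hWs, hWo, haW⟩ := eventually_nhds_iff.1 h
  filter_upwards [hWo.mem_nhds haW] with b hbW hbs
  exact closure_minimal (fun b' hb' => hWs b' hb'.1 hb'.2) (hf.isClosed_preimage c)
    (hWo.inter_closure ⟨hbW, hbs⟩)

theorem abs_infDist_le_of_forall_dist_le {Z : Type*} [PseudoMetricSpace Z] {C : ℝ}
    (hZ : ∀ z z' : Z, dist z z' ≤ C) (y : Z) (T : Set Z) : |infDist y T| ≤ C := by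
  rw [abs_of_nonneg infDist_nonneg]
  rcases T.eq_empty_or_nonempty with rfl | ⟨t, ht⟩
  · simpa using hZ y y
  · exact (infDist_le_dist_of_mem ht).trans (hZ y t)

theorem RightProxContAct.comp_uniformContinuous {G X Y Z : Type*} [Group G] [MulAction G X]
    [UniformSpace Y] [UniformSpace Z] {t : TopologicalSpace G} {f : X → Y}
    (hf : RightProxContAct t f) {π : Y → Z} (hπ : UniformContinuous π) :
    RightProxContAct t (π ∘ f) := fun φ hφ ⟨C, hC⟩ => hf (φ ∘ π) (hφ.comp hπ) ⟨C, fun y => hC (π y)⟩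

section Displacement

variable {G : Type u} [Group G] {X : Type v} [MulAction G X]

theorem RightProxContAct.exists_nhds_one_abs_sub_lt [TopologicalSpace G] {Y : Type*}
    [UniformSpace Y] {f : X → Y} (hf : RightProxContAct ‹_› f) {φ : Y → ℝ}
    (hφ : UniformContinuous φ) (hφb : ∃ C, ∀ y, |φ y| ≤ C) {θ : ℝ} (hθ : 0 < θ) :
    ∃ U ∈ 𝓝 (1 : G), ∀ g h, g * h⁻¹ ∈ U → ∀ x, |φ (f (g • x)) - φ (f (h • x))| < θ := by
  obtain ⟨U, hU, hUθ⟩ := hf φ hφ hφb _ (dist_mem_uniformity hθ)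
  exact ⟨U, hU, fun g h hgh x => by simpa [Real.dist_eq] using hUθ g h hgh x⟩

variable {Z : Type w} [PseudoMetricSpace Z] {F : X → Z}

theorem RightProxContAct.continuous_smul [TopologicalSpace G] [IsTopologicalGroup G]
    (hF : RightProxContAct ‹_› F) (hZ : ∀ z z' : Z, dist z z' ≤ 1) (x : X) :
    Continuous fun g : G => F (g • x) := by
  refine continuous_iff_continuousAt.2 fun g₀ => Metric.tendsto_nhds.2 fun ε hε => ?_
  obtain ⟨U, hU, hUε⟩ := hF.exists_nhds_one_abs_sub_lt
    (uniformContinuous_id.dist uniformContinuous_const)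
    ⟨1, fun z => (abs_of_nonneg dist_nonneg).trans_le (hZ z (F (g₀ • x)))⟩ hε
  rw [← nhds_translation_mul_inv g₀]
  filter_upwards [preimage_mem_comap hU] with g hg
  simpa using hUε g g₀ hg x

variable (F) in
noncomputable def displacement (g : G) : ℝ := ⨆ x, dist (F (g • x)) (F x)

theorem displacement_nonneg (g : G) : 0 ≤ displacement F g :=
  Real.iSup_nonneg fun _ => dist_nonneg

theorem displacement_le_one (hZ : ∀ z z' : Z, dist z z' ≤ 1) (g : G) : displacement F g ≤ 1 :=
  Real.iSup_le (fun x => hZ (F (g • x)) (F x)) zero_le_one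

theorem displacement_one : displacement F (1 : G) = 0 := by
  simp [displacement]

theorem dist_smul_le_displacement (hZ : ∀ z z' : Z, dist z z' ≤ 1) (g : G) (x : X) :
    dist (F (g • x)) (F x) ≤ displacement F g :=
  le_ciSup (f := fun x => dist (F (g • x)) (F x)) ⟨1, by rintro _ ⟨x, rfl⟩; exact hZ _ _⟩ x

theorem dist_smul_smul_le_displacement (hZ : ∀ z z' : Z, dist z z' ≤ 1) (g h : G) (x : X) :
    dist (F (g • x)) (F (h • x)) ≤ displacement F (g * h⁻¹) := by
  simpa [mul_smul] using dist_smul_le_displacement hZ (g * h⁻¹) (h • x)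

theorem displacement_le_add_of_forall_dist_le (hZ : ∀ z z' : Z, dist z z' ≤ 1) {a b : G} {ε : ℝ}
    (hε : 0 ≤ ε) (h : ∀ x, dist (F (b • x)) (F (a • x)) ≤ ε) :
    displacement F b ≤ displacement F a + ε :=
  Real.iSup_le (fun x => (dist_triangle _ (F (a • x)) _).trans <| by
      linarith [h x, dist_smul_le_displacement (F := F) hZ a x])
    (add_nonneg (displacement_nonneg a) hε)

theorem displacement_le_add (hZ : ∀ z z' : Z, dist z z' ≤ 1) (g h : G) :
    displacement F g ≤ displacement F h + displacement F (g * h⁻¹) :=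
  displacement_le_add_of_forall_dist_le hZ (displacement_nonneg (g * h⁻¹))
    (dist_smul_smul_le_displacement hZ g h)

theorem RightProxContAct.lowerSemicontinuous_displacement [TopologicalSpace G]
    [IsTopologicalGroup G] (hF : RightProxContAct ‹_› F) (hZ : ∀ z z' : Z, dist z z' ≤ 1) :
    LowerSemicontinuous (displacement F : G → ℝ) :=
  lowerSemicontinuous_ciSup (fun _ => ⟨1, by rintro _ ⟨x, rfl⟩; exact hZ _ _⟩) fun x =>
    ((hF.continuous_smul hZ x).dist continuous_const).lowerSemicontinuous

theorem rightUCAct_of_continuous_displacement [TopologicalSpace G]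
    (hZ : ∀ z z' : Z, dist z z' ≤ 1) (hF : Continuous (displacement F : G → ℝ)) :
    RightUCAct ‹TopologicalSpace G› F := by
  intro V hV
  obtain ⟨δ, hδ, hδV⟩ := mem_uniformity_dist.1 hV
  refine ⟨displacement F ⁻¹' Iio δ, hF.continuousAt.preimage_mem_nhds ?_,
    fun g h hgh x => hδV ((dist_smul_smul_le_displacement hZ g h x).trans_lt hgh)⟩
  rw [displacement_one]
  exact Iio_mem_nhds hδ

variable [TopologicalSpace G] [IsTopologicalGroup G]

theorem RightProxContAct.notMem_closure_iUnion_of_infDist_sep (hF : RightProxContAct ‹_› F)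
    (hZ : ∀ z z' : Z, dist z z' ≤ 1) {ι : Type*} {L : Set ι} (x : ι → X) (z : ι → Z)
    {T : Set Z} {σ : ℝ} (hσ : 0 < σ) (a : G)
    (hT : ∀ i ∈ L, ∀ q, dist q (z i) < σ → σ ≤ |infDist q T - infDist (F (a • x i)) T|) :
    a ∉ closure (⋃ i ∈ L, {g : G | dist (F (g • x i)) (z i) < σ}) := by
  intro ha
  obtain ⟨U, hU, hUT⟩ := hF.exists_nhds_one_abs_sub_lt (uniformContinuous_infDist_pt T)
    ⟨1, fun y => abs_infDist_le_of_forall_dist_le hZ y T⟩ hσ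
  obtain ⟨g, hgU, hgL⟩ := mem_closure_iff_nhds.1 ha _
    (by rw [← nhds_translation_mul_inv a]; exact preimage_mem_comap hU)
  obtain ⟨i, hi, hgi⟩ := mem_iUnion₂.1 hgL
  exact (hT i hi _ hgi).not_gt (hUT g a hgU (x i))

theorem RightProxContAct.eventually_dist_smul_lt (hF : RightProxContAct ‹_› F)
    (hZ : ∀ z z' : Z, dist z z' ≤ 1) {A : Set G} (hA : RelORadial A) {a : G} (ha : a ∈ A)
    {ε : ℝ} (hε : 0 < ε) : ∀ᶠ b in 𝓝[A] a, ∀ x, dist (F (b • x)) (F (a • x)) < ε := by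
  by_contra hfreq
  simp only [not_eventually, not_forall, not_lt, frequently_nhdsWithin_iff] at hfreq
  -- The open sets are indexed by functions on `G` rather than by pairs `(x, z)`, because
  -- `RelORadial` only quantifies over index types in the universe of `G`.
  let S : Set (G → ℝ) := {u | ε ≤ u a ∧ ∃ x z, u = fun g => dist (F (g • x)) z}
  choose x z hxz using fun u : S => u.2.2
  have hsep : ∀ u : S, 6 * (ε / 6) ≤ dist (F (a • x u)) (z u) := fun u => by
    have := u.2.1
    rw [hxz u] at this
    linarith
  let O : S → Set G := fun u => {g | dist (F (g • x u)) (z u) < ε / 6}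
  have hcont : ∀ u, Continuous fun g : G => dist (F (g • x u)) (z u) := fun u =>
    (hF.continuous_smul hZ _).dist continuous_const
  have hO_mem : a ∈ closure (⋃ u, O u ∩ A) := by
    refine mem_closure_iff_nhds.2 fun W hW => ?_
    obtain ⟨b, ⟨⟨y, hy⟩, hbA⟩, hbW⟩ := (hfreq.and_eventually hW).exists
    let u : S := ⟨fun g => dist (F (g • y)) (F (b • y)), by simpa [dist_comm] using hy, y, _, rfl⟩
    refine ⟨b, hbW, mem_iUnion.2 ⟨u, ?_, hbA⟩⟩
    have hub : u.1 b = 0 := dist_self _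
    rw [hxz u] at hub
    simp only [O, mem_ofPred_eq, hub]
    positivity
  have hO_closure : ∀ u, a ∉ closure (O u) := fun u hu => by
    linarith [hsep u, show dist (F (a • x u)) (z u) ≤ ε / 6 from
      closure_lt_subset_le (hcont u) continuous_const hu]
  obtain ⟨J, hJ, hJL⟩ := hA O a ha (fun u => isOpen_lt (hcont u) continuous_const) hO_mem
    hO_closure
  obtain ⟨L, hLJ, hL, T, hT⟩ :=
    exists_subset_infDist_sep_of_isRegular hJ _ z (by positivity) fun u _ => hsep u
  exact hF.notMem_closure_iUnion_of_infDist_sep hZ x z (by positivity) a hT (hJL L hLJ hL)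

theorem RightProxContAct.continuousWithinAt_displacement (hF : RightProxContAct ‹_› F)
    (hZ : ∀ z z' : Z, dist z z' ≤ 1) {A : Set G} (hA : RelORadial A) {a : G} (ha : a ∈ A) :
    ContinuousWithinAt (displacement F) (closure A) a := by
  have hlsc := hF.lowerSemicontinuous_displacement hZ
  refine continuousWithinAt_iff_lower_upperSemicontinuousWithinAt.2
    ⟨hlsc.lowerSemicontinuousWithinAt _ a, fun y hy => ?_⟩
  have hε : 0 < (y - displacement F a) / 2 := by linarith
  have hle := hlsc.eventually_le_nhdsWithin_closure <|
    (hF.eventually_dist_smul_lt hZ hA ha hε).mono fun b hb =>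
      displacement_le_add_of_forall_dist_le hZ hε.le fun x => (hb x).le
  exact hle.mono fun b hb => by linarith

theorem RightProxContAct.exists_continuous_eq_displacement (hF : RightProxContAct ‹_› F)
    (hZ : ∀ z z' : Z, dist z z' ≤ 1) {A : Set G} (hA : RelORadial (A * A⁻¹))
    (hne : A.Nonempty) :
    ∃ β : G → ℝ, Continuous β ∧ ∀ a ∈ closure A, β a = displacement F a := by
  obtain ⟨a₀, ha₀⟩ := hne
  have h1 : (1 : G) ∈ A * A⁻¹ := ⟨a₀, ha₀, a₀⁻¹, inv_mem_inv.2 ha₀, mul_inv_cancel a₀⟩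
  have hsmall : ∀ ε > 0, ∀ᶠ c in 𝓝[closure (A * A⁻¹)] (1 : G), displacement F c ≤ ε :=
    fun ε hε => (hF.lowerSemicontinuous_displacement hZ).eventually_le_nhdsWithin_closure <|
      (hF.eventually_dist_smul_lt hZ hA h1 hε).mono fun c hc => by
        simpa [displacement_one] using
          displacement_le_add_of_forall_dist_le hZ hε.le fun x => (hc x).le
  have hmul : ∀ b ∈ closure A, ∀ b' ∈ closure A, b * b'⁻¹ ∈ closure (A * A⁻¹) :=
    fun b hb b' hb' => map_mem_closure₂ continuous_mul hb
      (by rw [← inv_closure]; exact inv_mem_inv.2 hb') fun _ hx _ hy => mul_mem_mul hx hy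
  refine exists_continuous_eqOn_of_rightUniformContinuousOn
    (fun b _ b' _ => abs_sub_le_iff.2
      ⟨by linarith [displacement_le_one hZ b (F := F), displacement_nonneg b' (F := F)],
        by linarith [displacement_le_one hZ b' (F := F), displacement_nonneg b (F := F)]⟩)
    fun ε hε => ?_
  obtain ⟨U, hU, hUε⟩ := mem_nhdsWithin_iff_exists_mem_nhds_inter.1 (hsmall ε hε)
  refine ⟨U ∩ U⁻¹, inter_mem hU (inv_mem_nhds_one G hU), fun b hb b' hb' hbb' => ?_⟩
  have h₁ : displacement F (b * b'⁻¹) ≤ ε := hUε ⟨hbb'.1, hmul b hb b' hb'⟩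
  have h₂ : displacement F (b' * b⁻¹) ≤ ε :=
    hUε ⟨by simpa using hbb'.2, hmul b' hb' b hb⟩
  exact abs_sub_le_iff.2 ⟨by linarith [displacement_le_add hZ b b' (F := F)],
    by linarith [displacement_le_add hZ b' b (F := F)]⟩

end Displacement

/-- Theorem 2.5: let `G` be a topological group such that every bounded discontinuous
`α : G → ℝ` admits a set `A ⊆ G` for which either (1) `α` restricted to `closure A` has no
continuous extension to `G` and `A * A⁻¹` is relatively o-radial in `G`, or (2) `α` restricted
to `closure A` is discontinuous at some point of `A` and `A` is relatively o-radial in `G`.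
Then every right proximally continuous map from a `G`-set `X` into a uniform space `Y` is
right uniformly continuous. -/
theorem stmt_5 {G : Type u} [Group G] [TopologicalSpace G] [IsTopologicalGroup G]
    (hG : ∀ α : G → ℝ, (∃ C, ∀ g, |α g| ≤ C) → ¬Continuous α →
      ∃ A : Set G,
        ((¬∃ β : G → ℝ, Continuous β ∧ ∀ a ∈ closure A, β a = α a) ∧ RelORadial (A * A⁻¹)) ∨
        ((∃ a ∈ A, ¬ContinuousWithinAt α (closure A) a) ∧ RelORadial A))
    {X : Type v} [MulAction G X] {Y : Type w} [UniformSpace Y] (f : X → Y)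
    (hf : RightProxContAct ‹TopologicalSpace G› f) :
    RightUCAct ‹TopologicalSpace G› f := by
  intro V hV
  obtain ⟨Z, _, π, hπ, hZ, hπV⟩ :=
    exists_pseudoMetricSpace_uniformContinuous (fun _ => V) fun _ => hV
  have hF := hf.comp_uniformContinuous hπ
  suffices hFuc : RightUCAct ‹_› (π ∘ f) by
    obtain ⟨U, hU, hUV⟩ := hFuc _ (dist_mem_uniformity (by norm_num : (0 : ℝ) < 2⁻¹ ^ (0 + 1)))
    exact ⟨U, hU, fun g h hgh x => hπV 0 _ _ (hUV g h hgh x)⟩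
  refine rightUCAct_of_continuous_displacement hZ (by_contra fun hα => ?_)
  obtain ⟨A, ⟨hext, hA⟩ | ⟨⟨a, ha, hdisc⟩, hA⟩⟩ := hG _
    ⟨1, fun g => abs_le.2 ⟨by linarith [displacement_nonneg g (F := π ∘ f)],
      displacement_le_one hZ g⟩⟩ hα
  · rcases A.eq_empty_or_nonempty with rfl | hne
    · exact hext ⟨0, continuous_const, by simp⟩
    · exact hext (hF.exists_continuous_eq_displacement hZ hA hne)
  · exact hdisc (hF.continuousWithinAt_displacement hZ hA ha)
end

section
/- Let S be the group of finitary permutations of ℕ with the topology τ, fix k ∈ ℕ, and let φ : S → ℕ be the evaluation map φ(g) = g(k). If 𝒱 is any uniformity on ℕ such that φ : S → (ℕ, 𝒱) is right uniformly continuous with respect to the right uniformity of (S, τ), then 𝒱 is contained in the Samuel uniformity 𝒰 of ℕ. -/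
/-!
A Samuel entourage contains one of the form `{(x, y) | c x = c y}` for a finite colouring `c`,
and the permutations preserving `c` form a `τ`-neighbourhood of the identity. If `c x = c y`,
then `swap x y` preserves `c`, so the finitary permutations `swap x y * swap k y` and `swap k y`
are right-close; their values at `k` are `x` and `y`, hence `(x, y)` lies in any prescribed
`𝒱`-entourage.
-/


/-- The Samuel (precompact) uniformity on `ℕ`: a basis of entourages is given by the sets
`⋃ i, A i × A i` for `{A 1, …, A n}` a finite partition of `ℕ`; equivalently, it is the
infimum of the uniformities pulled back from finite discrete uniform spaces, a basis being
given by the sets `{(x, y) | c x = c y}` for `c : ℕ → Fin n`. -/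
noncomputable def samuelNat : UniformSpace ℕ :=
  ⨅ (n : ℕ) (c : ℕ → Fin n), UniformSpace.comap c ⊥

/-- The topology `τ` on `G = Sym(ℕ)`: the topology of uniform convergence when the target `ℕ`
carries the Samuel uniformity.  A basis of neighborhoods of the identity is given by the
subgroups `H_π = {g : g (A i) = A i, i = 1, …, n}`, `π = {A 1, …, A n}` a finite partition
of `ℕ`. -/
noncomputable def tauPerm : TopologicalSpace (Equiv.Perm ℕ) :=
  TopologicalSpace.induced (fun g => UniformFun.ofFun (⇑g))
    (@UniformFun.uniformSpace ℕ ℕ samuelNat).toTopologicalSpace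

/-- The subgroup `S` of finitary permutations of `ℕ`, i.e. those moving only finitely many
points. -/
def finitaryS : Subgroup (Equiv.Perm ℕ) where
  carrier := {g | {x | g x ≠ x}.Finite}
  one_mem' := by simp
  mul_mem' := by
    intro a b ha hb
    refine (ha.union hb).subset fun x hx => ?_
    by_cases h : b x = x
    · exact Or.inl (by simpa [Equiv.Perm.mul_apply, h] using hx)
    · exact Or.inr h
  inv_mem' := by
    intro a ha
    have h : {x | a⁻¹ x ≠ x} = {x | a x ≠ x} := by
      ext x
      simp only [Set.mem_setOf_eq, ne_eq, Equiv.Perm.inv_eq_iff_eq]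
      exact not_congr eq_comm
    show {x | a⁻¹ x ≠ x}.Finite
    rw [h]; exact ha

open Filter Topology

theorem samuelNat_uniformity_hasBasis :
    (@uniformity ℕ samuelNat).HasBasis (fun _ => True)
      fun c : Σ n, ℕ → Fin n => {p : ℕ × ℕ | c.2 p.1 = c.2 p.2} := by
  have hdir : Directed (· ≥ ·) fun c : Σ n, ℕ → Fin n => {p : ℕ × ℕ | c.2 p.1 = c.2 p.2} := by
    -- two colourings are refined by their product colouring
    rintro ⟨m, c⟩ ⟨n, d⟩
    exact ⟨⟨m * n, fun x => finProdFinEquiv (c x, d x)⟩,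
      fun p hp => (Prod.ext_iff.1 (finProdFinEquiv.injective hp)).1,
      fun p hp => (Prod.ext_iff.1 (finProdFinEquiv.injective hp)).2⟩
  have : Nonempty (Σ n, ℕ → Fin n) := ⟨⟨1, fun _ => 0⟩⟩
  have huniformity : @uniformity ℕ samuelNat =
      ⨅ c : Σ n, ℕ → Fin n, 𝓟 {p : ℕ × ℕ | c.2 p.1 = c.2 p.2} := by
    rw [iInf_sigma, samuelNat]
    simp only [iInf_uniformity, uniformity_comap, bot_uniformity, comap_principal]
    rfl
  exact huniformity ▸ hasBasis_iInf_principal hdir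

theorem tauPerm_nhds_one_hasBasis :
    (@nhds _ tauPerm 1).HasBasis (fun _ => True)
      fun c : Σ n, ℕ → Fin n => {g : Equiv.Perm ℕ | ∀ z, c.2 z = c.2 (g z)} := by
  let := samuelNat
  rw [tauPerm, nhds_induced]
  exact (UniformFun.hasBasis_nhds_of_basis ℕ ℕ _ samuelNat_uniformity_hasBasis).comap _

theorem swap_mem_finitaryS (a b : ℕ) : Equiv.swap a b ∈ finitaryS :=
  (Set.toFinite {a, b}).subset fun _ hx => (Equiv.swap_apply_ne_self_iff.1 hx).2

theorem comp_swap_eq_self {α β : Type*} [DecidableEq α] {f : α → β} {x y : α} (h : f x = f y) :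
    f ∘ Equiv.swap x y = f := by
  funext z
  rw [Function.comp_apply, Equiv.swap_apply_def]
  split_ifs <;> simp_all

/-- Proposition 3.1(2), second half: if `𝒱` is a uniformity on `ℕ` such that the evaluation
map `φ : g ↦ g k` on the group `S` of finitary permutations (with the topology induced by `τ`)
is right uniformly continuous into `(ℕ, 𝒱)`, then every `𝒱`-entourage is an entourage of the
Samuel uniformity, i.e. `𝒱 ⊆ 𝒰`. -/
theorem stmt_12 (k : ℕ) (V : UniformSpace ℕ)
    (h : @RightUC ↥finitaryS _ (TopologicalSpace.induced Subtype.val tauPerm) ℕ V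
      (fun g => (g : Equiv.Perm ℕ) k)) :
    ∀ s ∈ @uniformity ℕ V, s ∈ @uniformity ℕ samuelNat := by
  intro s hs
  obtain ⟨U, hU, hUs⟩ := h s hs
  rw [@nhds_induced _ _ tauPerm, mem_comap] at hU
  obtain ⟨U', hU', hU'U⟩ := hU
  obtain ⟨⟨n, c⟩, -, hcU'⟩ := tauPerm_nhds_one_hasBasis.mem_iff.1 hU'
  refine samuelNat_uniformity_hasBasis.mem_iff.2 ⟨⟨n, c⟩, trivial, ?_⟩
  rintro ⟨x, y⟩ (hxy : c x = c y)
  let σ : ↥finitaryS := ⟨Equiv.swap x y, swap_mem_finitaryS x y⟩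
  let τ : ↥finitaryS := ⟨Equiv.swap k y, swap_mem_finitaryS k y⟩
  have hσ : σ ∈ U := hU'U <| hcU' fun z => congrFun (comp_swap_eq_self hxy).symm z
  simpa [σ, τ] using hUs (σ * τ) τ (by rwa [mul_inv_cancel_right])
end
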